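/- arXiv:1711.07892 — 2 statements merged into one kernel-verified Lean document; each statement's English description precedes it below -/
import Mathlib

section
/- Let X be a complex Banach space, let g : [0,∞) → X be locally Bochner integrable, let x₀ > 0 and C > 0, and suppose that ‖e^{-x₀t} ∫₀ᵗ e^{x₀s} g(s) ds‖ ≤ C for every t ≥ 0. Then for every x with 0 < x ≤ x₀ one has ‖e^{-xt} ∫₀ᵗ e^{xs} g(s) ds‖ ≤ C x₀ / x for every t ≥ 0. -/
/-!
Write `e^{xs} = e^{(x-x₀)s} e^{x₀s}` and integrate by parts against the primitive
`F r = ∫₀ʳ e^{x₀s} g(s) ds`, which the hypothesis bounds by `C e^{x₀r}`. The boundary term is at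
most `C e^{xt}`, and the remaining term `(x₀ - x) ∫₀ᵗ e^{(x-x₀)r} ‖F r‖ dr` is at most
`C (x₀ - x)(e^{xt} - 1)/x`; together they give `C x₀ e^{xt} / x`.
Since `F` is only absolutely continuous, the integration by parts is obtained from Fubini's theorem
after writing `φ s = φ t - ∫ₛᵗ φ'`.
-/

open MeasureTheory Set

section

variable {E : Type*} [NormedAddCommGroup E] [NormedSpace ℝ E] [CompleteSpace E]

theorem setIntegral_Ioc_integral_Ioc_smul_swap
    {μ : Measure ℝ} [SFinite μ] [NullSingletonClass μ] {k : ℝ → ℝ} {h : ℝ → E} {a b : ℝ}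
    (hk : IntegrableOn k (Ioc a b) μ) (hh : IntegrableOn h (Ioc a b) μ) :
    ∫ s in Ioc a b, (∫ r in Ioc s b, k r ∂μ) • h s ∂μ
      = ∫ r in Ioc a b, k r • ∫ s in Ioc a r, h s ∂μ ∂μ := by
  set F : ℝ → ℝ → E := fun r s =>
    {p : ℝ × ℝ | p.2 ≤ p.1}.indicator (fun p => k p.1 • h p.2) (r, s)
  have hF : Integrable (Function.uncurry F)
      ((μ.restrict (Ioc a b)).prod (μ.restrict (Ioc a b))) :=
    (hk.smul_prod hh).indicator (measurableSet_le measurable_snd measurable_fst)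
  have inner_fst : ∀ r ∈ Ioc a b, ∫ s in Ioc a b, F r s ∂μ = k r • ∫ s in Ioc a r, h s ∂μ := by
    intro r hr
    have hIoc : Ioc a b ∩ Iic r = Ioc a r := by
      rw [Ioc_inter_Iic, min_eq_right hr.2]
    rw [← integral_smul, ← hIoc, ← setIntegral_indicator measurableSet_Iic]
    rfl
  have inner_snd : ∀ s ∈ Ioc a b, ∫ r in Ioc a b, F r s ∂μ = (∫ r in Ioc s b, k r ∂μ) • h s := by
    intro s hs
    have hIcc : Ioc a b ∩ Ici s = Icc s b := by
      ext r; simp only [mem_inter_iff, mem_Ioc, mem_Ici, mem_Icc]; grind [hs.1]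
    rw [← integral_smul_const, ← integral_Icc_eq_integral_Ioc (x := s), ← hIcc,
      ← setIntegral_indicator measurableSet_Ici]
    rfl
  calc ∫ s in Ioc a b, (∫ r in Ioc s b, k r ∂μ) • h s ∂μ
      = ∫ s in Ioc a b, ∫ r in Ioc a b, F r s ∂μ ∂μ :=
        (setIntegral_congr_fun measurableSet_Ioc inner_snd).symm
    _ = ∫ r in Ioc a b, ∫ s in Ioc a b, F r s ∂μ ∂μ := (integral_integral_swap hF).symm
    _ = ∫ r in Ioc a b, k r • ∫ s in Ioc a r, h s ∂μ ∂μ :=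
        setIntegral_congr_fun measurableSet_Ioc inner_fst

theorem setIntegral_Ioc_smul_eq_sub_integral_deriv_smul {φ φ' : ℝ → ℝ} {h : ℝ → E} {a b : ℝ}
    (hφ : ∀ r ∈ Icc a b, HasDerivAt φ (φ' r) r) (hφ' : IntegrableOn φ' (Ioc a b))
    (hh : IntegrableOn h (Ioc a b)) :
    ∫ s in Ioc a b, φ s • h s
      = φ b • (∫ s in Ioc a b, h s) - ∫ r in Ioc a b, φ' r • ∫ s in Ioc a r, h s := by
  have ftc : ∀ s ∈ Ioc a b, φ s = φ b - ∫ r in Ioc s b, φ' r := by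
    intro s hs
    rw [← intervalIntegral.integral_of_le hs.2, intervalIntegral.integral_eq_sub_of_hasDerivAt
      (fun r hr => hφ r (Icc_subset_Icc hs.1.le le_rfl (uIcc_of_le hs.2 ▸ hr)))
      ((intervalIntegrable_iff_integrableOn_Ioc_of_le hs.2).2
        (hφ'.mono_set (Ioc_subset_Ioc_left hs.1.le)))]
    ring
  have hφ_cont : ContinuousOn φ (Icc a b) := fun r hr => (hφ r hr).continuousAt.continuousWithinAt
  have hφh : IntegrableOn (fun s => φ s • h s) (Ioc a b) :=
    hh.continuousOn_smul_of_subset hφ_cont isCompact_Icc measurableSet_Ioc Ioc_subset_Icc_self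
  have hφbh : IntegrableOn (fun s => φ b • h s) (Ioc a b) := hh.smul (φ b)
  have hrest : IntegrableOn (fun s => (∫ r in Ioc s b, φ' r) • h s) (Ioc a b) :=
    (hφbh.sub hφh).congr_fun (fun s hs => by simp [ftc s hs, sub_smul]) measurableSet_Ioc
  calc ∫ s in Ioc a b, φ s • h s
      = ∫ s in Ioc a b, (φ b • h s - (∫ r in Ioc s b, φ' r) • h s) :=
        setIntegral_congr_fun measurableSet_Ioc fun s hs => by rw [ftc s hs, sub_smul]
    _ = φ b • (∫ s in Ioc a b, h s) - ∫ r in Ioc a b, φ' r • ∫ s in Ioc a r, h s := by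
        rw [integral_sub hφbh hrest, integral_smul,
          setIntegral_Ioc_integral_Ioc_smul_swap hφ' hh]

theorem setIntegral_Ioc_exp_mul {x : ℝ} (hx : x ≠ 0) {t : ℝ} (ht : 0 ≤ t) :
    ∫ r in Ioc 0 t, Real.exp (x * r) = (Real.exp (x * t) - 1) / x := by
  rw [← intervalIntegral.integral_of_le ht, intervalIntegral.integral_comp_mul_left _ hx,
    integral_exp]
  simp [div_eq_inv_mul]

theorem norm_setIntegral_Ioc_exp_smul_le {h : ℝ → E} {x x₀ C t : ℝ} (hx : 0 < x) (hxx₀ : x ≤ x₀)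
    (ht : 0 ≤ t) (hh : IntegrableOn h (Ioc 0 t))
    (hH : ∀ r ∈ Icc 0 t, ‖∫ s in Ioc 0 r, h s‖ ≤ C * Real.exp (x₀ * r)) :
    ‖∫ s in Ioc 0 t, Real.exp ((x - x₀) * s) • h s‖ ≤ C * x₀ / x * Real.exp (x * t) := by
  have hC : 0 ≤ C := by simpa using (norm_nonneg _).trans (hH 0 ⟨le_rfl, ht⟩)
  have exp_mul_exp : ∀ r, Real.exp ((x - x₀) * r) * Real.exp (x₀ * r) = Real.exp (x * r) := by
    intro r; rw [← Real.exp_add]; ring_nf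
  have hφ : ∀ r ∈ Icc 0 t, HasDerivAt (fun s => Real.exp ((x - x₀) * s))
      ((x - x₀) * Real.exp ((x - x₀) * r)) r := by
    intro r _
    simpa [mul_comm] using ((hasDerivAt_id r).const_mul (x - x₀)).exp
  rw [setIntegral_Ioc_smul_eq_sub_integral_deriv_smul hφ
    (by fun_prop : Continuous _).integrableOn_Ioc hh]
  have hfirst : ‖Real.exp ((x - x₀) * t) • ∫ s in Ioc 0 t, h s‖ ≤ C * Real.exp (x * t) := by
    rw [norm_smul, Real.norm_of_nonneg (Real.exp_pos _).le, ← exp_mul_exp, mul_left_comm]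
    exact mul_le_mul_of_nonneg_left (hH t ⟨ht, le_rfl⟩) (Real.exp_pos _).le
  have hsecond : ‖∫ r in Ioc 0 t, ((x - x₀) * Real.exp ((x - x₀) * r)) • ∫ s in Ioc 0 r, h s‖
      ≤ (x₀ - x) * C * ((Real.exp (x * t) - 1) / x) := by
    rw [← setIntegral_Ioc_exp_mul hx.ne' ht, ← integral_const_mul]
    refine norm_integral_le_of_norm_le ((by fun_prop : Continuous _).integrableOn_Ioc) ?_
    refine ae_restrict_of_forall_mem measurableSet_Ioc fun r hr => ?_
    rw [norm_smul, Real.norm_eq_abs, abs_mul, abs_of_nonpos (by linarith),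
      abs_of_pos (Real.exp_pos _), neg_sub, ← exp_mul_exp]
    calc (x₀ - x) * Real.exp ((x - x₀) * r) * ‖∫ s in Ioc 0 r, h s‖
        ≤ (x₀ - x) * Real.exp ((x - x₀) * r) * (C * Real.exp (x₀ * r)) :=
          mul_le_mul_of_nonneg_left (hH r (Ioc_subset_Icc_self hr))
            (mul_nonneg (sub_nonneg.2 hxx₀) (Real.exp_pos _).le)
      _ = (x₀ - x) * C * (Real.exp ((x - x₀) * r) * Real.exp (x₀ * r)) := by ring
  calc _ ≤ C * Real.exp (x * t) + (x₀ - x) * C * ((Real.exp (x * t) - 1) / x) :=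
        (norm_sub_le _ _).trans (add_le_add hfirst hsecond)
    _ ≤ C * Real.exp (x * t) + (x₀ - x) * C * (Real.exp (x * t) / x) := by
        gcongr
        linarith
    _ = C * x₀ / x * Real.exp (x * t) := by field_simp; ring

end

theorem stmt_2_general {X : Type*} [NormedAddCommGroup X] [NormedSpace ℂ X] [CompleteSpace X]
    (g : ℝ → X) (hg : LocallyIntegrableOn g (Set.Ici 0))
    (x₀ C : ℝ)
    (hbound : ∀ t : ℝ, 0 ≤ t →
      ‖Real.exp (-x₀ * t) • ∫ s in Set.Ioc (0 : ℝ) t, Real.exp (x₀ * s) • g s‖ ≤ C) :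
    ∀ x : ℝ, 0 < x → x ≤ x₀ → ∀ t : ℝ, 0 ≤ t →
      ‖Real.exp (-x * t) • ∫ s in Set.Ioc (0 : ℝ) t, Real.exp (x * s) • g s‖ ≤ C * x₀ / x := by
  intro x hx hxx₀ t ht
  have hh : IntegrableOn (fun s => Real.exp (x₀ * s) • g s) (Ioc 0 t) :=
    ((hg.integrableOn_compact_subset Icc_subset_Ici_self isCompact_Icc).continuousOn_smul
      (by fun_prop) isCompact_Icc).mono_set Ioc_subset_Icc_self
  have hH : ∀ r ∈ Icc 0 t,
      ‖∫ s in Ioc 0 r, Real.exp (x₀ * s) • g s‖ ≤ C * Real.exp (x₀ * r) := by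
    intro r hr
    have := hbound r hr.1
    rwa [norm_smul, Real.norm_of_nonneg (Real.exp_pos _).le, neg_mul, Real.exp_neg,
      inv_mul_le_iff₀ (Real.exp_pos _), mul_comm] at this
  have hweight : ∀ s, Real.exp (x * s) • g s
      = Real.exp ((x - x₀) * s) • Real.exp (x₀ * s) • g s := by
    intro s; rw [smul_smul, ← Real.exp_add]; ring_nf
  simp_rw [hweight]
  rw [norm_smul, Real.norm_of_nonneg (Real.exp_pos _).le]
  calc _ ≤ Real.exp (-x * t) * (C * x₀ / x * Real.exp (x * t)) :=
        by gcongr; exact norm_setIntegral_Ioc_exp_smul_le hx hxx₀ ht hh hH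
    _ = C * x₀ / x := by rw [mul_left_comm, ← Real.exp_add]; simp

theorem stmt_2 {X : Type*} [NormedAddCommGroup X] [NormedSpace ℂ X] [CompleteSpace X]
    (g : ℝ → X) (hg : LocallyIntegrableOn g (Set.Ici 0))
    (x₀ C : ℝ) (hx₀ : 0 < x₀) (hC : 0 < C)
    (hbound : ∀ t : ℝ, 0 ≤ t →
      ‖Real.exp (-x₀ * t) • ∫ s in Set.Ioc (0 : ℝ) t, Real.exp (x₀ * s) • g s‖ ≤ C) :
    ∀ x : ℝ, 0 < x → x ≤ x₀ → ∀ t : ℝ, 0 ≤ t →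
      ‖Real.exp (-x * t) • ∫ s in Set.Ioc (0 : ℝ) t, Real.exp (x * s) • g s‖ ≤ C * x₀ / x :=
  stmt_2_general g hg x₀ C hbound
end

section
/- Let X be a complex Banach space and (a_n)_{n≥1} a sequence in X, and assume that for some x > 0 and C > 0 one has ‖e^{-xt} ∑_{n : log n < t} n^{x} a_n‖ ≤ C for every t ≥ 0, where sums run over natural numbers n ≥ 1 with log n < t. Then for every y ∈ ℝ, writing z = x + iy, the series ∑_{n=1}^∞ a_n n^{-z} converges in X (i.e. the partial sums ∑_{n : log n < v} a_n n^{-z} converge as v → ∞), and for every t ≥ 0 one has ‖e^{xt} ∑_{n : log n ≥ t} a_n n^{-z}‖ ≤ C(3 + |y|/x), where ∑_{n : log n ≥ t} a_n n^{-z} denotes the limit of ∑_{n : t ≤ log n < v} a_n n^{-z} as v → ∞. -/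
/-!
Put `b n = n ^ x • a n` and `w = z + x`, so that `a n n^{-z} = n^{-w} • b n` with `Re w = 2x`,
and the hypothesis says that the partial sums `B N = b 1 + ⋯ + b N` satisfy `‖B N‖ ≤ C s ^ x`
for `N < s ≤ N + 1`. Abel summation rewrites the partial sums of `n^{-w} • b n` as a boundary
term `(N+1)^{-w} • B N = O(N^{-x})` plus the series of `(n^{-w} - (n+1)^{-w}) • B n`. Since
`n^{-w} - (n+1)^{-w} = w ∫_n^{n+1} s^{-w-1} ds`, the `n`-th term of that series is at most
`C ‖w‖ ∫_n^{n+1} s^{-x-1} ds`, so it converges with tails bounded by `C ‖w‖ / x · n^{-x}`.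
Together with the boundary term and `‖w‖ ≤ 2x + |y|` this gives the constant `3 + |y| / x`.
-/

open Filter Finset Topology Real intervalIntegral

theorem Finset.sum_range_smul_eq_smul_sum_add {R E : Type*} [Ring R] [AddCommGroup E]
    [Module R E] (c : ℕ → R) (b : ℕ → E) (N : ℕ) :
    ∑ k ∈ range N, c k • b k =
      c N • ∑ k ∈ range N, b k + ∑ k ∈ range N, (c k - c (k + 1)) • ∑ j ∈ range (k + 1), b j := by
  induction N with
  | zero => simp
  | succ N ih =>
    simp only [sum_range_succ _ N, ih, smul_add, sub_smul]
    abel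

theorem exists_tendsto_sum_range_of_norm_le_sub {E : Type*} [NormedAddCommGroup E]
    [CompleteSpace E] {d : ℕ → E} {g : ℕ → ℝ} (hg : Tendsto g atTop (𝓝 0))
    (hd : ∀ k, ‖d k‖ ≤ g k - g (k + 1)) :
    ∃ L, Tendsto (fun N => ∑ k ∈ range N, d k) atTop (𝓝 L) ∧
      ∀ M, ‖L - ∑ k ∈ range M, d k‖ ≤ g M := by
  have hanti : Antitone g :=
    antitone_nat_of_succ_le fun k => sub_nonneg.1 ((norm_nonneg _).trans (hd k))
  have hV : ∀ M N, M ≤ N → ‖∑ k ∈ range N, d k - ∑ k ∈ range M, d k‖ ≤ g M := by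
    intro M N hMN
    rw [← sum_Ico_eq_sub _ hMN]
    calc _ ≤ ∑ k ∈ Ico M N, (g k - g (k + 1)) := norm_sum_le_of_le _ fun k _ => hd k
      _ = g M - g N := by
          rw [← neg_sub (g N) (g M), ← sum_Ico_sub g hMN, ← sum_neg_distrib]
          simp only [neg_sub]
      _ ≤ g M := sub_le_self _ (hanti.le_of_tendsto hg N)
  obtain ⟨L, hL⟩ := cauchySeq_tendsto_of_complete <|
    cauchySeq_of_le_tendsto_0' (s := fun N => ∑ k ∈ range N, d k) g
      (fun M N h => by rw [dist_comm, dist_eq_norm]; exact hV M N h) hg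
  exact ⟨L, hL, fun M => le_of_tendsto ((hL.sub_const (∑ k ∈ range M, d k)).norm)
    (eventually_atTop.2 ⟨M, hV M⟩)⟩

theorem cpow_neg_sub_cpow_neg_eq_integral {u v : ℝ} (hu : 0 < u) (huv : u ≤ v) (w : ℂ) :
    (u : ℂ) ^ (-w) - (v : ℂ) ^ (-w) = ∫ s in u..v, w * (s : ℂ) ^ (-w - 1) := by
  rcases eq_or_ne w 0 with rfl | hw
  · simp
  have h0 : (0 : ℝ) ∉ Set.uIcc u v := by
    rw [Set.uIcc_of_le huv]; exact fun h => hu.not_ge h.1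
  rw [integral_const_mul, integral_cpow (Or.inr ⟨by simpa [sub_eq_neg_add] using hw, h0⟩),
    sub_add_cancel]
  field_simp
  ring

theorem norm_cpow_neg_sub_cpow_neg_smul_le {E : Type*} [NormedAddCommGroup E] [NormedSpace ℂ E]
    [CompleteSpace E] {u v x C : ℝ} {w : ℂ} {B : E} (hu : 0 < u) (huv : u ≤ v) (hxw : x < w.re)
    (hB : ∀ s ∈ Set.Ioc u v, ‖B‖ ≤ C * s ^ x) :
    ‖((u : ℂ) ^ (-w) - (v : ℂ) ^ (-w)) • B‖ ≤
      C * ‖w‖ / (w.re - x) * (u ^ (x - w.re) - v ^ (x - w.re)) := by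
  have h0 : (0 : ℝ) ∉ Set.uIcc u v := by
    rw [Set.uIcc_of_le huv]; exact fun h => hu.not_ge h.1
  have hpointwise : ∀ s ∈ Set.Ioc u v,
      ‖(w * (s : ℂ) ^ (-w - 1)) • B‖ ≤ C * ‖w‖ * s ^ (x - w.re - 1) := by
    intro s hs
    have hs0 : 0 < s := hu.trans hs.1
    have hexp : s ^ (x - w.re - 1) = s ^ (-w - 1).re * s ^ x := by
      rw [← Real.rpow_add hs0]
      simp only [Complex.sub_re, Complex.neg_re, Complex.one_re]
      ring_nf
    rw [norm_smul, norm_mul, Complex.norm_cpow_eq_rpow_re_of_pos hs0, hexp]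
    calc ‖w‖ * s ^ (-w - 1).re * ‖B‖ ≤ ‖w‖ * s ^ (-w - 1).re * (C * s ^ x) := by
          gcongr; exact hB s hs
      _ = C * ‖w‖ * (s ^ (-w - 1).re * s ^ x) := by ring
  have hint : IntervalIntegrable (fun s : ℝ => C * ‖w‖ * s ^ (x - w.re - 1))
      MeasureTheory.volume u v :=
    (intervalIntegrable_rpow (Or.inr h0)).const_mul _
  rw [cpow_neg_sub_cpow_neg_eq_integral hu huv, ← intervalIntegral.integral_smul_const]
  calc _ ≤ ∫ s in u..v, C * ‖w‖ * s ^ (x - w.re - 1) :=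
        norm_integral_le_of_norm_le huv (MeasureTheory.ae_of_all _ hpointwise) hint
    _ = _ := by
        have hne : x - w.re ≠ 0 := by linarith
        have hne' : w.re - x ≠ 0 := by linarith
        rw [integral_const_mul, integral_rpow (Or.inr ⟨by linarith, h0⟩), sub_add_cancel]
        field_simp
        ring

theorem exists_tendsto_sum_range_cpow_smul {E : Type*} [NormedAddCommGroup E] [NormedSpace ℂ E]
    [CompleteSpace E] {b : ℕ → E} {x C : ℝ} {w : ℂ} (hxw : x < w.re)
    (hb : ∀ n : ℕ, ∀ s ∈ Set.Ioc (n : ℝ) (n + 1), ‖∑ k ∈ range n, b k‖ ≤ C * s ^ x) :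
    ∃ L, Tendsto (fun N => ∑ k ∈ range N, ((k + 1 : ℕ) : ℂ) ^ (-w) • b k) atTop (𝓝 L) ∧
      ∀ M : ℕ, ‖L - ∑ k ∈ range M, ((k + 1 : ℕ) : ℂ) ^ (-w) • b k‖ ≤
        C * (1 + ‖w‖ / (w.re - x)) * ((M : ℝ) + 1) ^ (x - w.re) := by
  set c : ℕ → ℂ := fun k => ((k + 1 : ℕ) : ℂ) ^ (-w)
  set B : ℕ → E := fun n => ∑ k ∈ range n, b k
  set g : ℕ → ℝ := fun M => ((M : ℝ) + 1) ^ (x - w.re)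
  set K := C * ‖w‖ / (w.re - x)
  have hc : ∀ k : ℕ, c k = (((k : ℝ) + 1 : ℝ) : ℂ) ^ (-w) := fun k => by
    simp only [c]; push_cast; rfl
  have hg : Tendsto g atTop (𝓝 0) := by
    show Tendsto (fun M : ℕ => ((M : ℝ) + 1) ^ (x - w.re)) _ _
    rw [← neg_sub w.re x]
    exact (tendsto_rpow_neg_atTop (sub_pos.2 hxw)).comp
      (tendsto_atTop_add_const_right _ 1 tendsto_natCast_atTop_atTop)
  have hboundary : ∀ N, ‖c N • B N‖ ≤ C * g N := by
    intro N
    have hN : (0 : ℝ) < N + 1 := by positivity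
    rw [norm_smul, hc, Complex.norm_cpow_eq_rpow_re_of_pos hN, Complex.neg_re]
    calc ((N : ℝ) + 1) ^ (-w.re) * ‖B N‖
        ≤ ((N : ℝ) + 1) ^ (-w.re) * (C * ((N : ℝ) + 1) ^ x) := by
          gcongr; exact hb N _ ⟨by linarith, le_rfl⟩
      _ = C * g N := by rw [mul_left_comm, ← Real.rpow_add hN, neg_add_eq_sub]
  have hterm : ∀ k, ‖(c k - c (k + 1)) • B (k + 1)‖ ≤ K * g k - K * g (k + 1) := by
    intro k
    have h := norm_cpow_neg_sub_cpow_neg_smul_le (B := B (k + 1))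
      (by positivity : (0 : ℝ) < k + 1) (by linarith : (k : ℝ) + 1 ≤ k + 1 + 1) hxw
      (by exact_mod_cast hb (k + 1))
    simpa only [hc, g, Nat.cast_add_one, mul_sub] using h
  obtain ⟨L, hVL, hLV⟩ := exists_tendsto_sum_range_of_norm_le_sub
    (by simpa using hg.const_mul K) hterm
  have hB0 : Tendsto (fun N => c N • B N) atTop (𝓝 0) :=
    squeeze_zero_norm hboundary (by simpa using hg.const_mul C)
  have habel := sum_range_smul_eq_smul_sum_add c b
  refine ⟨L, ?_, fun M => ?_⟩
  · simpa only [zero_add] using (hB0.add hVL).congr fun N => (habel N).symm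
  · rw [habel]
    calc _ = ‖(L - ∑ k ∈ range M, (c k - c (k + 1)) • B (k + 1)) - c M • B M‖ := by
          congr 1; abel
      _ ≤ K * g M + C * g M := (norm_sub_le _ _).trans (add_le_add (hLV M) (hboundary M))
      _ = _ := by ring

theorem Finset.sum_Ico_one_eq_sum_range {M : Type*} [AddCommMonoid M] (F : ℕ → M) (N : ℕ) :
    ∑ n ∈ Ico 1 N, F n = ∑ k ∈ range (N - 1), F (k + 1) := by
  simp only [sum_Ico_eq_sum_range, add_comm 1]

theorem filter_log_lt_eq_Ico (v : ℝ) :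
    (Icc 1 ⌊exp v⌋₊).filter (fun n : ℕ => log n < v) = Ico 1 ⌈exp v⌉₊ := by
  ext n
  simp only [mem_filter, mem_Icc, mem_Ico, Nat.lt_ceil]
  constructor
  · rintro ⟨⟨hn, -⟩, hlog⟩
    exact ⟨hn, (log_lt_iff_lt_exp (by exact_mod_cast hn)).1 hlog⟩
  · rintro ⟨hn, hlt⟩
    exact ⟨⟨hn, Nat.le_floor hlt.le⟩, (log_lt_iff_lt_exp (by exact_mod_cast hn)).2 hlt⟩

theorem filter_le_log_lt_eq_Ico (t v : ℝ) :
    (Icc 1 ⌊exp v⌋₊).filter (fun n : ℕ => t ≤ log n ∧ log n < v) =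
      Ico ⌈exp t⌉₊ ⌈exp v⌉₊ := by
  have hpos : 1 ≤ ⌈exp t⌉₊ := Nat.one_le_ceil_iff.2 (exp_pos t)
  ext n
  simp only [mem_filter, mem_Icc, mem_Ico, Nat.lt_ceil, Nat.ceil_le]
  constructor
  · rintro ⟨⟨hn, -⟩, hle, hlog⟩
    have hn' : (0 : ℝ) < n := by exact_mod_cast hn
    exact ⟨(le_log_iff_exp_le hn').1 hle, (log_lt_iff_lt_exp hn').1 hlog⟩
  · rintro ⟨hle, hlt⟩
    have hn : 1 ≤ n := hpos.trans (Nat.ceil_le.2 hle)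
    have hn' : (0 : ℝ) < n := by exact_mod_cast hn
    exact ⟨⟨hn, Nat.le_floor hlt.le⟩, (le_log_iff_exp_le hn').2 hle,
      (log_lt_iff_lt_exp hn').2 hlt⟩

theorem sum_filter_log_lt {M : Type*} [AddCommMonoid M] (F : ℕ → M) (v : ℝ) :
    ∑ n ∈ (Icc 1 ⌊exp v⌋₊).filter (fun n : ℕ => log n < v), F n =
      ∑ k ∈ range (⌈exp v⌉₊ - 1), F (k + 1) := by
  rw [filter_log_lt_eq_Ico, sum_Ico_one_eq_sum_range]

theorem sum_filter_le_log_lt {M : Type*} [AddCommGroup M] (F : ℕ → M) {t v : ℝ} (htv : t ≤ v) :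
    ∑ n ∈ (Icc 1 ⌊exp v⌋₊).filter (fun n : ℕ => t ≤ log n ∧ log n < v), F n =
      ∑ k ∈ range (⌈exp v⌉₊ - 1), F (k + 1) - ∑ k ∈ range (⌈exp t⌉₊ - 1), F (k + 1) := by
  rw [filter_le_log_lt_eq_Ico, ← sum_Ico_one_eq_sum_range, ← sum_Ico_one_eq_sum_range,
    ← sum_Ico_consecutive F (Nat.one_le_ceil_iff.2 (exp_pos t))
      (Nat.ceil_mono (exp_le_exp.2 htv)), add_sub_cancel_left]

theorem norm_sum_range_rpow_smul_le {X : Type*} [NormedAddCommGroup X] [NormedSpace ℝ X]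
    (a : ℕ → X) {x C : ℝ} (hC : 0 ≤ C)
    (hbound : ∀ t : ℝ, 0 ≤ t →
      ‖exp (-x * t) • ∑ n ∈ (Icc 1 ⌊exp t⌋₊).filter (fun n : ℕ => log n < t),
        ((n : ℝ) ^ x) • a n‖ ≤ C)
    (n : ℕ) (s : ℝ) (hs : s ∈ Set.Ioc (n : ℝ) (n + 1)) :
    ‖∑ k ∈ range n, (((k + 1 : ℕ) : ℝ) ^ x) • a (k + 1)‖ ≤ C * s ^ x := by
  rcases Nat.eq_zero_or_pos n with rfl | hn
  · simp only [range_zero, sum_empty, norm_zero]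
    exact mul_nonneg hC (rpow_nonneg (by simpa using hs.1.le) x)
  have hs1 : 1 < s := lt_of_le_of_lt (by exact_mod_cast hn) hs.1
  have hs0 : 0 < s := one_pos.trans hs1
  have hceil : ⌈s⌉₊ - 1 = n := by
    rw [(Nat.ceil_eq_iff n.succ_ne_zero).2 ⟨by simpa using hs.1, by exact_mod_cast hs.2⟩]
    rfl
  have h := hbound (log s) (log_nonneg hs1.le)
  rw [sum_filter_log_lt, exp_log hs0, hceil, norm_smul, norm_of_nonneg (exp_pos _).le,
    mul_comm (-x), exp_mul, exp_log hs0, rpow_neg hs0.le,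
    inv_mul_le_iff₀ (rpow_pos_of_pos hs0 x)] at h
  linarith

theorem natCast_cpow_neg_add_smul_rpow_smul {X : Type*} [AddCommGroup X] [Module ℂ X] {n : ℕ}
    (hn : n ≠ 0) (z : ℂ) (x : ℝ) (v : X) :
    (n : ℂ) ^ (-(z + x)) • ((n : ℝ) ^ x • v) = (n : ℂ) ^ (-z) • v := by
  rw [← Complex.coe_smul, Complex.ofReal_cpow n.cast_nonneg, smul_smul, Complex.ofReal_natCast,
    ← Complex.cpow_add _ _ (Nat.cast_ne_zero.2 hn), neg_add, neg_add_cancel_right]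

theorem exp_mul_mul_rpow_neg_le_one {x : ℝ} (hx : 0 ≤ x) (t : ℝ) :
    exp (x * t) * (((⌈exp t⌉₊ - 1 : ℕ) : ℝ) + 1) ^ (-x) ≤ 1 := by
  have hceil : 1 ≤ ⌈exp t⌉₊ := Nat.one_le_ceil_iff.2 (exp_pos t)
  rw [Nat.cast_sub hceil, Nat.cast_one, sub_add_cancel, mul_comm x t, exp_mul,
    rpow_neg (Nat.cast_nonneg _), ← div_eq_mul_inv,
    div_le_one (rpow_pos_of_pos (by exact_mod_cast hceil) x)]
  exact rpow_le_rpow (exp_pos t).le (Nat.le_ceil _) hx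

theorem stmt_18 {X : Type*} [NormedAddCommGroup X] [NormedSpace ℂ X] [CompleteSpace X]
    (a : ℕ → X) (x C : ℝ) (hx : 0 < x) (hC : 0 < C)
    (hbound : ∀ t : ℝ, 0 ≤ t →
      ‖Real.exp (-x * t) •
          ∑ n ∈ (Finset.Icc 1 ⌊Real.exp t⌋₊).filter (fun n : ℕ => Real.log (n : ℝ) < t),
            ((n : ℝ) ^ x) • a n‖ ≤ C) :
    ∀ y : ℝ,
      (∃ L : X,
        Filter.Tendsto
          (fun v : ℝ =>
            ∑ n ∈ (Finset.Icc 1 ⌊Real.exp v⌋₊).filter (fun n : ℕ => Real.log (n : ℝ) < v),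
              (((n : ℕ) : ℂ) ^ (-((x : ℂ) + y * Complex.I))) • a n)
          Filter.atTop (nhds L)) ∧
      ∀ t : ℝ, 0 ≤ t → ∃ Lt : X,
        Filter.Tendsto
          (fun v : ℝ =>
            ∑ n ∈ (Finset.Icc 1 ⌊Real.exp v⌋₊).filter
                (fun n : ℕ => t ≤ Real.log (n : ℝ) ∧ Real.log (n : ℝ) < v),
              (((n : ℕ) : ℂ) ^ (-((x : ℂ) + y * Complex.I))) • a n)
          Filter.atTop (nhds Lt) ∧
        ‖Real.exp (x * t) • Lt‖ ≤ C * (3 + |y| / x) := by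
  intro y
  set z : ℂ := x + y * Complex.I
  have hre : (z + x).re = x + x := by simp [z]
  have hnorm : ‖z + x‖ / x ≤ 2 + |y| / x := by
    rw [div_le_iff₀ hx, add_mul, div_mul_cancel₀ _ hx.ne']
    simpa [z, abs_of_pos hx, ← two_mul] using Complex.norm_le_abs_re_add_abs_im (z + x)
  obtain ⟨L, hL, htail⟩ := exists_tendsto_sum_range_cpow_smul (w := z + x) (by linarith)
    (norm_sum_range_rpow_smul_le a hC.le hbound)
  simp only [natCast_cpow_neg_add_smul_rpow_smul (Nat.succ_ne_zero _), hre,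
    add_sub_cancel_right, sub_add_cancel_left] at hL htail
  set F : ℕ → X := fun n => (n : ℂ) ^ (-z) • a n
  set S : ℕ → X := fun N => ∑ k ∈ range N, F (k + 1)
  have hcount : Tendsto (fun v : ℝ => ⌈exp v⌉₊ - 1) atTop atTop :=
    (tendsto_sub_atTop_nat 1).comp (tendsto_nat_ceil_atTop.comp tendsto_exp_atTop)
  refine ⟨⟨L, (hL.comp hcount).congr fun v => (sum_filter_log_lt F v).symm⟩,
    fun t ht => ⟨L - S (⌈exp t⌉₊ - 1), ?_, ?_⟩⟩
  · refine ((hL.comp hcount).sub_const _).congr' ?_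
    filter_upwards [eventually_ge_atTop t] with v htv
    exact (sum_filter_le_log_lt F htv).symm
  · calc ‖exp (x * t) • (L - S (⌈exp t⌉₊ - 1))‖
        = exp (x * t) * ‖L - S (⌈exp t⌉₊ - 1)‖ := by
          rw [norm_smul, norm_of_nonneg (exp_pos _).le]
      _ ≤ exp (x * t) * (C * (1 + ‖z + x‖ / x) * (((⌈exp t⌉₊ - 1 : ℕ) : ℝ) + 1) ^ (-x)) := by
          gcongr; exact htail _
      _ = C * (1 + ‖z + x‖ / x) * (exp (x * t) * (((⌈exp t⌉₊ - 1 : ℕ) : ℝ) + 1) ^ (-x)) := by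
          ring
      _ ≤ C * (1 + ‖z + x‖ / x) :=
          mul_le_of_le_one_right (by positivity) (exp_mul_mul_rpow_neg_le_one hx.le t)
      _ ≤ C * (3 + |y| / x) := mul_le_mul_of_nonneg_left (by linarith) hC.le
end
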